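/- If n ≥ 4 is even and k ≥ 3, then the minimum size of a doubly resolving set of the Cartesian product C_n □ P_k is 4. -/

import Mathlib

open SimpleGraph

/-- `Q` is a resolving set of `G`: distinct vertices have distinct distance vectors to `Q`. -/
def IsResolving {V : Type*} (G : SimpleGraph V) (Q : Finset V) : Prop :=
  ∀ x y : V, (∀ q ∈ Q, G.dist x q = G.dist y q) → x = y

/-- `Q` is a doubly resolving set of `G`. -/
def IsDoublyResolving {V : Type*} (G : SimpleGraph V) (Q : Finset V) : Prop :=
  ∀ x y : V, x ≠ y → ∃ u ∈ Q, ∃ v ∈ Q,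
    (G.dist x u : ℤ) - (G.dist x v : ℤ) ≠ (G.dist y u : ℤ) - (G.dist y v : ℤ)

/-- `Q` is a strong resolving set of `G`: for distinct `p q` some `r ∈ Q` has
`p` on a shortest `q`–`r` path or `q` on a shortest `p`–`r` path. -/
def IsStrongResolving {V : Type*} (G : SimpleGraph V) (Q : Finset V) : Prop :=
  ∀ p q : V, p ≠ q → ∃ r ∈ Q,
    G.dist q r = G.dist q p + G.dist p r ∨ G.dist p r = G.dist p q + G.dist q r

section Aux


lemma mod_cases {t n : ℕ} (h : n ≠ 0) (h2 : t < 2*n) : t % n = if t < n then t else t - n := by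
  rcases Nat.lt_or_ge t n with h3 | h3
  · simp [Nat.mod_eq_of_lt h3, h3]
  · rw [Nat.mod_eq_sub_mod h3, Nat.mod_eq_of_lt (by omega)]
    simp [Nat.not_lt.mpr h3]

section potential
variable {V : Type*} {G : SimpleGraph V}

lemma le_length_of_lip {v : V} {f : V → ℕ} (h0 : f v = 0)
    (hlip : ∀ x y, G.Adj x y → f x ≤ f y + 1) :
    ∀ {u : V} (w : G.Walk u v), f u ≤ w.length := by
  intro u w
  induction w with
  | nil => simp [h0]
  | cons h p ih =>
    have := hlip _ _ h
    simpa using this.trans (by omega)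

lemma dist_le_of_descent (hc : G.Connected) {v : V} {f : V → ℕ}
    (hdesc : ∀ x, f x ≠ 0 → ∃ y, G.Adj x y ∧ f y + 1 ≤ f x)
    (hzero : ∀ x, f x = 0 → x = v) :
    ∀ (u : V), G.dist u v ≤ f u := by
  suffices H : ∀ (m : ℕ) (u : V), f u ≤ m → G.dist u v ≤ f u by
    intro u; exact H (f u) u le_rfl
  intro m
  induction m with
  | zero =>
    intro u hu
    have h0 := hzero u (by omega)
    subst h0
    have := SimpleGraph.dist_self (G := G) (v := u)
    omega
  | succ m ih =>
    intro u hu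
    rcases Nat.eq_zero_or_pos (f u) with h | h
    · have h0 := hzero u h; subst h0
      have := SimpleGraph.dist_self (G := G) (v := u)
      omega
    · obtain ⟨y, hadj, hy⟩ := hdesc u (by omega)
      have h1 : G.dist u y ≤ 1 := dist_le (Walk.cons hadj Walk.nil)
      have h2 : G.dist y v ≤ f y := ih y (by omega)
      have h3 := hc.dist_triangle (u := u) (v := y) (w := v)
      omega

lemma dist_eq_potential (hc : G.Connected) {v : V} {f : V → ℕ} (h0 : f v = 0)
    (hlip : ∀ x y, G.Adj x y → f x ≤ f y + 1)
    (hdesc : ∀ x, f x ≠ 0 → ∃ y, G.Adj x y ∧ f y + 1 ≤ f x)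
    (hzero : ∀ x, f x = 0 → x = v) (u : V) : G.dist u v = f u := by
  refine le_antisymm (dist_le_of_descent hc hdesc hzero u) ?_
  obtain ⟨p, hp⟩ := hc.exists_walk_length_eq_dist u v
  rw [← hp]; exact le_length_of_lip h0 hlip p

end potential

section boxdist
variable {α β : Type*} {G : SimpleGraph α} {H : SimpleGraph β}

lemma boxProd_dist (hG : G.Connected) (hH : H.Connected) (x y : α × β) :
    (G □ H).dist x y = G.dist x.1 y.1 + H.dist x.2 y.2 := by
  refine le_antisymm ?_ ?_
  · obtain ⟨p, hp⟩ := hG.exists_walk_length_eq_dist x.1 y.1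
    obtain ⟨q, hq⟩ := hH.exists_walk_length_eq_dist x.2 y.2
    have := dist_le ((p.boxProdLeft H x.2).append (q.boxProdRight G y.1))
    have l1 : (p.boxProdLeft H x.2).length = p.length := Walk.length_map _ p
    have l2 : (q.boxProdRight G y.1).length = q.length := Walk.length_map _ q
    simpa [Walk.length_append, l1, l2, hp, hq] using this
  · obtain ⟨p, hp⟩ := (hG.boxProd hH).exists_walk_length_eq_dist x y
    rw [← hp]
    clear hp
    induction p with
    | nil => simp
    | @cons u z w h p ih =>
      rw [boxProd_adj] at h
      simp only [Walk.length_cons]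
      rcases h with ⟨h1, h2⟩ | ⟨h1, h2⟩
      · have h3 : G.dist u.1 w.1 ≤ 1 + G.dist z.1 w.1 := by
          have := hG.dist_triangle (u := u.1) (v := z.1) (w := w.1)
          have h1' : G.dist u.1 z.1 ≤ 1 := dist_le (Walk.cons h1 Walk.nil)
          omega
        rw [← h2] at ih
        omega
      · have h3 : H.dist u.2 w.2 ≤ 1 + H.dist z.2 w.2 := by
          have := hH.dist_triangle (u := u.2) (v := z.2) (w := w.2)
          have h1' : H.dist u.2 z.2 ≤ 1 := dist_le (Walk.cons h1 Walk.nil)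
          omega
        rw [← h2] at ih
        omega

end boxdist

/-- absolute difference -/
def pd (a b : ℕ) : ℕ := (a - b) + (b - a)

/-- cyclic distance between residues -/
def cd (n a b : ℕ) : ℕ := min (pd a b) (n - pd a b)

lemma cyc_adj {n : ℕ} (hn : 2 ≤ n) (x y : Fin n) :
    (cycleGraph n).Adj x y ↔ (x.val = y.val + 1 ∨ y.val = x.val + 1 ∨
      (x.val = 0 ∧ y.val = n-1) ∨ (y.val = 0 ∧ x.val = n-1)) := by
  have hx := x.2; have hy := y.2
  rw [cycleGraph_adj']
  have h1 : (x - y).val = (n - y.val + x.val) % n := by simp [Fin.sub_def]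
  have h2 : (y - x).val = (n - x.val + y.val) % n := by simp [Fin.sub_def]
  rw [h1, h2, mod_cases (by omega) (by omega), mod_cases (by omega) (by omega)]
  split_ifs <;> omega

lemma pathGraph_dist {k : ℕ} (i j : Fin k) : (pathGraph k).dist i j = pd i.val j.val := by
  rcases k with _ | k
  · exact i.elim0
  refine dist_eq_potential (pathGraph_connected k) (f := fun x => pd x.val j.val) ?_ ?_ ?_ ?_ i
  · simp [pd]
  · intro x y h
    rw [pathGraph_adj] at h
    simp only [pd]; omega
  · intro x hx
    simp only [pd] at hx
    rcases Nat.lt_or_ge x.val j.val with h | h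
    · exact ⟨⟨x.val + 1, by omega⟩, by rw [pathGraph_adj]; left; rfl, by simp [pd]; omega⟩
    · refine ⟨⟨x.val - 1, by omega⟩, by rw [pathGraph_adj]; right; simp; omega, by simp [pd]; omega⟩
  · intro x hx
    simp only [pd] at hx
    exact Fin.ext (by omega)

lemma cycleGraph_dist {n : ℕ} (hn : 2 ≤ n) (i j : Fin n) :
    (cycleGraph n).dist i j = cd n i.val j.val := by
  obtain ⟨p, rfl⟩ : ∃ p, n = p + 2 := ⟨n - 2, by omega⟩
  have hconn : (cycleGraph (p+2)).Connected := cycleGraph_connected (n := p+1)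
  refine dist_eq_potential hconn (f := fun x => cd (p+2) x.val j.val) ?_ ?_ ?_ ?_ i
  · simp [cd, pd]
  · intro x y h
    rw [cyc_adj hn] at h
    have hx := x.2; have hy := y.2; have hj := j.2
    simp only [cd, pd]
    omega
  · intro x hx
    have hxv := x.2; have hjv := j.2
    simp only [cd, pd] at hx
    rcases Nat.lt_or_ge (pd x.val j.val) ((p+2) - pd x.val j.val) with hcase | hcase
    all_goals rcases Nat.lt_or_ge x.val j.val with h | h
    · refine ⟨⟨x.val + 1, by simp only [pd] at hcase; omega⟩, ?_, ?_⟩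
      · rw [cyc_adj hn]; show _ ∨ x.val + 1 = _ ∨ _ ∨ _; omega
      · beta_reduce; simp only [Fin.val_mk, cd, pd] at hcase ⊢; omega
    · refine ⟨⟨x.val - 1, by omega⟩, ?_, ?_⟩
      · rw [cyc_adj hn]; show x.val = (x.val - 1) + 1 ∨ _; omega
      · beta_reduce; simp only [Fin.val_mk, cd, pd] at hcase ⊢; omega
    · refine ⟨⟨if x.val = 0 then p+1 else x.val - 1, by split_ifs <;> omega⟩, ?_, ?_⟩
      · rw [cyc_adj hn]
        show (x.val = (if x.val = 0 then p+1 else x.val - 1) + 1) ∨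
          ((if x.val = 0 then p+1 else x.val - 1) = x.val + 1) ∨
          (x.val = 0 ∧ (if x.val = 0 then p+1 else x.val - 1) = p+2-1) ∨
          ((if x.val = 0 then p+1 else x.val - 1) = 0 ∧ x.val = p+2-1)
        simp only [pd] at hx hcase; split_ifs <;> omega
      · beta_reduce; simp only [Fin.val_mk, cd, pd] at hx hcase ⊢; split_ifs <;> omega
    · refine ⟨⟨if x.val = p+1 then 0 else x.val + 1, by split_ifs <;> omega⟩, ?_, ?_⟩
      · rw [cyc_adj hn]
        show (x.val = (if x.val = p+1 then 0 else x.val + 1) + 1) ∨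
          ((if x.val = p+1 then 0 else x.val + 1) = x.val + 1) ∨
          (x.val = 0 ∧ (if x.val = p+1 then 0 else x.val + 1) = p+2-1) ∨
          ((if x.val = p+1 then 0 else x.val + 1) = 0 ∧ x.val = p+2-1)
        simp only [pd] at hx hcase; split_ifs <;> omega
      · beta_reduce; simp only [Fin.val_mk, cd, pd] at hx hcase ⊢; split_ifs <;> omega
  · intro x hx
    have hxv := x.2; have hjv := j.2
    simp only [cd, pd] at hx
    exact Fin.ext (by omega)

/-- The distance formula in `C_n □ P_k`. -/
lemma CP_dist {n k : ℕ} (hn : 2 ≤ n) (hk : 1 ≤ k) (x y : Fin n × Fin k) :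
    (cycleGraph n □ pathGraph k).dist x y = cd n x.1.val y.1.val + pd x.2.val y.2.val := by
  obtain ⟨p, rfl⟩ : ∃ p, n = p + 1 := ⟨n - 1, by omega⟩
  obtain ⟨q, rfl⟩ : ∃ q, k = q + 1 := ⟨k - 1, by omega⟩
  rw [boxProd_dist cycleGraph_connected (pathGraph_connected q), cycleGraph_dist hn,
    pathGraph_dist]

def Sl (m β r : ℕ) : Prop := (β ≤ r ∧ r - β < m) ∨ (r < β ∧ r + 2*m - β < m)
def ant (m c : ℕ) : ℕ := if c < m then c + m else c - m
lemma Sl_self (m r : ℕ) (hm : 1 ≤ m) : Sl m r r := Or.inl ⟨le_rfl, by omega⟩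
lemma Sl_ant (m c : ℕ) (hc : c < 2*m) : ¬ Sl m c (ant m c) := by
  simp only [Sl, ant]; split_ifs <;> omega
lemma ant_lt (m c : ℕ) (hm : 1 ≤ m) (hc : c < 2*m) : ant m c < 2*m := by
  simp only [ant]; split_ifs <;> omega
lemma edge_exists (m : ℕ) (hm : 2 ≤ m) {β1 β2 β3 r : ℕ} (hr : r < 2*m)
    (hb1 : β1 < 2*m) (hb2 : β2 < 2*m) (hb3 : β3 < 2*m) :
    ∃ r', r' < 2*m ∧ r' ≠ r ∧
      (Sl m β1 r → cd (2*m) r' β1 = cd (2*m) r β1 + 1) ∧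
      (¬Sl m β1 r → cd (2*m) r β1 = cd (2*m) r' β1 + 1) ∧
      (Sl m β2 r → cd (2*m) r' β2 = cd (2*m) r β2 + 1) ∧
      (¬Sl m β2 r → cd (2*m) r β2 = cd (2*m) r' β2 + 1) ∧
      (Sl m β3 r → cd (2*m) r' β3 = cd (2*m) r β3 + 1) ∧
      (¬Sl m β3 r → cd (2*m) r β3 = cd (2*m) r' β3 + 1) := by
  refine ⟨if r + 1 = 2*m then 0 else r + 1, ?_⟩
  simp only [Sl, cd, pd]
  split_ifs <;> omega
lemma refl_pair (m : ℕ) (hm : 2 ≤ m) {c e β : ℕ} (hc : c < 2*m) (he : e < 2*m) (hβ : β < 2*m)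
    (hd : e = c + m ∨ c = e + m) :
    ∃ p q : ℕ, p < 2*m ∧ q < 2*m ∧ p ≠ q ∧
      cd (2*m) p c = 1 ∧ cd (2*m) q c = 1 ∧
      cd (2*m) p e = m - 1 ∧ cd (2*m) q e = m - 1 ∧
      (cd (2*m) p β = cd (2*m) q β ∨ cd (2*m) p β = cd (2*m) q β + 2 ∨
        cd (2*m) q β = cd (2*m) p β + 2) := by
  refine ⟨if c + 1 = 2*m then 0 else c + 1, if c = 0 then 2*m - 1 else c - 1, ?_⟩
  simp only [cd, pd]
  split_ifs <;> omega

/-- Core combinatorial lemma: three beacons with rows 0, k-1, J can always be fooled. -/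
lemma Hcore (m k : ℕ) (hm : 2 ≤ m) (hk : 3 ≤ k) (β1 β2 β3 J : ℕ)
    (hb1 : β1 < 2*m) (hb2 : β2 < 2*m) (hb3 : β3 < 2*m) (hJ : J < k) :
    ∃ (a i a' i' : ℕ) (C : ℤ), a < 2*m ∧ a' < 2*m ∧ i < k ∧ i' < k ∧ (a ≠ a' ∨ i ≠ i') ∧
      ((cd (2*m) a β1 : ℤ) + pd i 0 - ((cd (2*m) a' β1 : ℤ) + pd i' 0) = C) ∧
      ((cd (2*m) a β2 : ℤ) + pd i (k-1) - ((cd (2*m) a' β2 : ℤ) + pd i' (k-1)) = C) ∧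
      ((cd (2*m) a β3 : ℤ) + pd i J - ((cd (2*m) a' β3 : ℤ) + pd i' J) = C) := by
  by_cases hJ1 : J = k - 1
  · -- T1 : third beacon on the top row
    by_cases hA : Sl m β3 β2
    · obtain ⟨r', hr', hner, p1, n1, p2, n2, p3, n3⟩ := edge_exists m hm hb2 hb1 hb2 hb3
      have e2 := p2 (Sl_self m β2 (by omega))
      have e3 := p3 hA
      by_cases hB : Sl m β1 β2
      · have e1 := p1 hB
        refine ⟨β2, 0, r', 0, -1, hb2, hr', by omega, by omega,
          Or.inl fun h => hner h.symm, ?_, ?_, ?_⟩ <;> simp only [pd] <;> omega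
      · have e1 := n1 hB
        refine ⟨β2, 0, r', 1, 0, hb2, hr', by omega, by omega,
          Or.inr (by omega), ?_, ?_, ?_⟩ <;> simp only [pd] <;> omega
    · by_cases hA2 : Sl m β2 β3
      · obtain ⟨r', hr', hner, p1, n1, p2, n2, p3, n3⟩ := edge_exists m hm hb3 hb1 hb2 hb3
        have e2 := p2 hA2
        have e3 := p3 (Sl_self m β3 (by omega))
        by_cases hB : Sl m β1 β3
        · have e1 := p1 hB
          refine ⟨β3, 0, r', 0, -1, hb3, hr', by omega, by omega,
            Or.inl fun h => hner h.symm, ?_, ?_, ?_⟩ <;> simp only [pd] <;> omega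
        · have e1 := n1 hB
          refine ⟨β3, 0, r', 1, 0, hb3, hr', by omega, by omega,
            Or.inr (by omega), ?_, ?_, ?_⟩ <;> simp only [pd] <;> omega
      · -- degenerate: β3 antipodal to β2
        have hdeg : β3 = β2 + m ∨ β2 = β3 + m := by
          simp only [Sl] at hA hA2; omega
        obtain ⟨p, q, hp, hq, hpq, c1p, c1q, cep, ceq, tri⟩ :=
          refl_pair m hm hb2 hb3 hb1 hdeg
        rcases tri with t0 | t2 | t2
        · refine ⟨p, 0, q, 0, 0, hp, hq, by omega, by omega, Or.inl hpq, ?_, ?_, ?_⟩ <;>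
            simp only [pd] <;> omega
        · refine ⟨p, 0, q, 1, 1, hp, hq, by omega, by omega, Or.inl hpq, ?_, ?_, ?_⟩ <;>
            simp only [pd] <;> omega
        · refine ⟨p, 1, q, 0, -1, hp, hq, by omega, by omega, Or.inl hpq, ?_, ?_, ?_⟩ <;>
            simp only [pd] <;> omega
  · by_cases hJ0 : J = 0
    · -- T2 : third beacon on the bottom row
      by_cases hA : Sl m β3 (ant m β1)
      · by_cases hA2 : Sl m β1 (ant m β3)
        · -- degenerate
          have hdeg : β3 = β1 + m ∨ β1 = β3 + m := by
            simp only [Sl, ant] at hA hA2; split_ifs at hA hA2 <;> omega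
          obtain ⟨p, q, hp, hq, hpq, c1p, c1q, cep, ceq, tri⟩ :=
            refl_pair m hm hb1 hb3 hb2 hdeg
          rcases tri with t0 | t2 | t2
          · refine ⟨p, 0, q, 0, 0, hp, hq, by omega, by omega, Or.inl hpq, ?_, ?_, ?_⟩ <;>
              simp only [pd] <;> omega
          · refine ⟨p, 1, q, 0, 1, hp, hq, by omega, by omega, Or.inl hpq, ?_, ?_, ?_⟩ <;>
              simp only [pd] <;> omega
          · refine ⟨p, 0, q, 1, -1, hp, hq, by omega, by omega, Or.inl hpq, ?_, ?_, ?_⟩ <;>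
              simp only [pd] <;> omega
        · -- edge at r := ant m β3
          obtain ⟨r', hr', hner, p1, n1, p2, n2, p3, n3⟩ :=
            edge_exists m hm (ant_lt m β3 (by omega) hb3) hb1 hb2 hb3
          have e1 := n1 hA2
          have e3 := n3 (Sl_ant m β3 hb3)
          by_cases hB : Sl m β2 (ant m β3)
          · have e2 := p2 hB
            refine ⟨ant m β3, k-2, r', k-1, 0, ant_lt m β3 (by omega) hb3, hr',
              by omega, by omega, Or.inr (by omega), ?_, ?_, ?_⟩ <;> simp only [pd] <;> omega
          · have e2 := n2 hB
            refine ⟨ant m β3, 0, r', 0, 1, ant_lt m β3 (by omega) hb3, hr',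
              by omega, by omega, Or.inl fun h => hner h.symm, ?_, ?_, ?_⟩ <;>
              simp only [pd] <;> omega
      · -- edge at r := ant m β1
        obtain ⟨r', hr', hner, p1, n1, p2, n2, p3, n3⟩ :=
          edge_exists m hm (ant_lt m β1 (by omega) hb1) hb1 hb2 hb3
        have e1 := n1 (Sl_ant m β1 hb1)
        have e3 := n3 hA
        by_cases hB : Sl m β2 (ant m β1)
        · have e2 := p2 hB
          refine ⟨ant m β1, k-2, r', k-1, 0, ant_lt m β1 (by omega) hb1, hr',
            by omega, by omega, Or.inr (by omega), ?_, ?_, ?_⟩ <;> simp only [pd] <;> omega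
        · have e2 := n2 hB
          refine ⟨ant m β1, 0, r', 0, 1, ant_lt m β1 (by omega) hb1, hr',
            by omega, by omega, Or.inl fun h => hner h.symm, ?_, ?_, ?_⟩ <;>
            simp only [pd] <;> omega
    · -- T3 : 1 ≤ J ≤ k-2
      have hJlo : 1 ≤ J := by omega
      have hJhi : J ≤ k - 2 := by omega
      by_cases hA : Sl m β2 (ant m β1)
      · obtain ⟨r', hr', hner, p1, n1, p2, n2, p3, n3⟩ :=
          edge_exists m hm (ant_lt m β1 (by omega) hb1) hb1 hb2 hb3
        have e1 := n1 (Sl_ant m β1 hb1)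
        have e2 := p2 hA
        by_cases hC : Sl m β3 (ant m β1)
        · have e3 := p3 hC
          refine ⟨ant m β1, 0, r', 1, 0, ant_lt m β1 (by omega) hb1, hr',
            by omega, by omega, Or.inr (by omega), ?_, ?_, ?_⟩ <;> simp only [pd] <;> omega
        · have e3 := n3 hC
          refine ⟨ant m β1, k-2, r', k-1, 0, ant_lt m β1 (by omega) hb1, hr',
            by omega, by omega, Or.inr (by omega), ?_, ?_, ?_⟩ <;> simp only [pd] <;> omega
      · by_cases hB : Sl m β1 β2
        · -- β1 = β2
          have hE : β1 = β2 := by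
            simp only [Sl, ant] at hA hB; split_ifs at hA <;> omega
          by_cases hC : Sl m β3 β1
          · -- all plus at r := β1
            obtain ⟨r', hr', hner, p1, n1, p2, n2, p3, n3⟩ := edge_exists m hm hb1 hb1 hb2 hb3
            have e1 := p1 (Sl_self m β1 (by omega))
            have e2 := p2 (by rw [← hE]; exact Sl_self m β1 (by omega))
            have e3 := p3 hC
            refine ⟨β1, 0, r', 0, -1, hb1, hr', by omega, by omega,
              Or.inl fun h => hner h.symm, ?_, ?_, ?_⟩ <;> simp only [pd] <;> omega
          · by_cases hC2 : Sl m β3 (ant m β1)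
            · by_cases hD : Sl m β1 β3
              · -- all plus at r := β3
                obtain ⟨r', hr', hner, p1, n1, p2, n2, p3, n3⟩ :=
                  edge_exists m hm hb3 hb1 hb2 hb3
                have e1 := p1 hD
                have e2 := p2 (by rw [← hE]; exact hD)
                have e3 := p3 (Sl_self m β3 (by omega))
                refine ⟨β3, 0, r', 0, -1, hb3, hr', by omega, by omega,
                  Or.inl fun h => hner h.symm, ?_, ?_, ?_⟩ <;> simp only [pd] <;> omega
              · by_cases hD2 : Sl m β1 (ant m β3)
                · -- degenerate: β3 antipodal to β1 = β2
                  have hdeg : β3 = β1 + m ∨ β1 = β3 + m := by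
                    simp only [Sl, ant] at hC hC2 hD hD2
                    split_ifs at hC2 hD2 <;> omega
                  obtain ⟨p, q, hp, hq, hpq, c1p, c1q, cep, ceq, tri⟩ :=
                    refl_pair m hm hb1 hb3 hb1 hdeg
                  have b2p : cd (2*m) p β2 = 1 := by rw [← hE]; exact c1p
                  have b2q : cd (2*m) q β2 = 1 := by rw [← hE]; exact c1q
                  refine ⟨p, 0, q, 0, 0, hp, hq, by omega, by omega, Or.inl hpq,
                    ?_, ?_, ?_⟩ <;> simp only [pd] <;> omega
                · -- all minus at r := ant m β3
                  obtain ⟨r', hr', hner, p1, n1, p2, n2, p3, n3⟩ :=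
                    edge_exists m hm (ant_lt m β3 (by omega) hb3) hb1 hb2 hb3
                  have e1 := n1 hD2
                  have e2 := n2 (by rw [← hE]; exact hD2)
                  have e3 := n3 (Sl_ant m β3 hb3)
                  refine ⟨ant m β3, 0, r', 0, 1, ant_lt m β3 (by omega) hb3, hr',
                    by omega, by omega, Or.inl fun h => hner h.symm, ?_, ?_, ?_⟩ <;>
                    simp only [pd] <;> omega
            · -- all minus at r := ant m β1
              obtain ⟨r', hr', hner, p1, n1, p2, n2, p3, n3⟩ :=
                edge_exists m hm (ant_lt m β1 (by omega) hb1) hb1 hb2 hb3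
              have e1 := n1 (Sl_ant m β1 hb1)
              have e2 := n2 (by rw [← hE]; exact Sl_ant m β1 hb1)
              have e3 := n3 hC2
              refine ⟨ant m β1, 0, r', 0, 1, ant_lt m β1 (by omega) hb1, hr',
                by omega, by omega, Or.inl fun h => hner h.symm, ?_, ?_, ?_⟩ <;>
                simp only [pd] <;> omega
        · -- edge at r := β2
          obtain ⟨r', hr', hner, p1, n1, p2, n2, p3, n3⟩ := edge_exists m hm hb2 hb1 hb2 hb3
          have e1 := n1 hB
          have e2 := p2 (Sl_self m β2 (by omega))
          by_cases hC : Sl m β3 β2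
          · have e3 := p3 hC
            refine ⟨β2, 0, r', 1, 0, hb2, hr', by omega, by omega,
              Or.inr (by omega), ?_, ?_, ?_⟩ <;> simp only [pd] <;> omega
          · have e3 := n3 hC
            refine ⟨β2, k-2, r', k-1, 0, hb2, hr', by omega, by omega,
              Or.inr (by omega), ?_, ?_, ?_⟩ <;> simp only [pd] <;> omega

lemma row_eq (k I I' c c' : ℕ) (hk : 3 ≤ k) (hI : I < k) (hI' : I' < k)
    (e : ((c + pd I (k-1) : ℕ) : ℤ) - ((c + pd I 0 : ℕ) : ℤ)
       = ((c' + pd I' (k-1) : ℕ) : ℤ) - ((c' + pd I' 0 : ℕ) : ℤ)) : I = I' := by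
  simp only [pd] at e; omega

lemma cd0_eq (m A B u v : ℕ) (hm : 2 ≤ m) (hA : A < 2*m) (hB : B < 2*m)
    (e : ((cd (2*m) A m + u : ℕ) : ℤ) - ((cd (2*m) A 0 + u : ℕ) : ℤ)
       = ((cd (2*m) B m + v : ℕ) : ℤ) - ((cd (2*m) B 0 + v : ℕ) : ℤ)) :
    cd (2*m) A 0 = cd (2*m) B 0 := by
  simp only [cd, pd] at e ⊢; omega

lemma fin_eq (m A B i j : ℕ) (hm : 2 ≤ m) (hA : A < 2*m) (hB : B < 2*m)
    (h0 : cd (2*m) A 0 = cd (2*m) B 0)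
    (e : ((cd (2*m) A 1 + i : ℕ) : ℤ) - ((cd (2*m) A 0 + j : ℕ) : ℤ)
       = ((cd (2*m) B 1 + i : ℕ) : ℤ) - ((cd (2*m) B 0 + j : ℕ) : ℤ)) : A = B := by
  simp only [cd, pd] at e h0; omega

lemma upper (m k : ℕ) (hm : 2 ≤ m) (hk : 3 ≤ k) :
    IsDoublyResolving (cycleGraph (2*m) □ pathGraph k)
      {((⟨0, by omega⟩ : Fin (2*m)), (⟨0, by omega⟩ : Fin k)), (⟨m, by omega⟩, ⟨0, by omega⟩),
       (⟨0, by omega⟩, ⟨k-1, by omega⟩), (⟨1, by omega⟩, ⟨k-1, by omega⟩)} := by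
  have h2m : 2 ≤ 2*m := by omega
  have hk1 : 1 ≤ k := by omega
  intro x y hxy
  by_contra hcon
  push_neg at hcon
  have e1 := hcon (⟨m, by omega⟩, ⟨0, by omega⟩) (by simp)
    (⟨0, by omega⟩, ⟨0, by omega⟩) (by simp)
  have e2 := hcon (⟨0, by omega⟩, ⟨k-1, by omega⟩) (by simp)
    (⟨0, by omega⟩, ⟨0, by omega⟩) (by simp)
  have e3 := hcon (⟨1, by omega⟩, ⟨k-1, by omega⟩) (by simp)
    (⟨0, by omega⟩, ⟨0, by omega⟩) (by simp)
  simp only [CP_dist h2m hk1] at e1 e2 e3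
  have hI : x.2.val = y.2.val := row_eq k x.2.val y.2.val _ _ hk x.2.isLt y.2.isLt e2
  have h0 : cd (2*m) x.1.val 0 = cd (2*m) y.1.val 0 :=
    cd0_eq m x.1.val y.1.val _ _ hm x.1.isLt y.1.isLt e1
  rw [hI] at e3
  have hA : x.1.val = y.1.val := fin_eq m x.1.val y.1.val _ _ hm x.1.isLt y.1.isLt h0 e3
  exact hxy (Prod.ext (Fin.ext hA) (Fin.ext hI))


lemma master (m k : ℕ) (hm : 2 ≤ m) (hk : 3 ≤ k)
    (q1 q2 q3 : Fin (2*m) × Fin k) (h1 : q1.2.val = 0) (h2 : q2.2.val = k - 1) :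
    ∃ x y : Fin (2*m) × Fin k, x ≠ y ∧ ∃ C : ℤ,
      ∀ q ∈ ({q1, q2, q3} : Finset (Fin (2*m) × Fin k)),
        ((cycleGraph (2*m) □ pathGraph k).dist x q : ℤ) -
          ((cycleGraph (2*m) □ pathGraph k).dist y q : ℤ) = C := by
  have h2m : 2 ≤ 2*m := by omega
  have hk1 : 1 ≤ k := by omega
  obtain ⟨a, i, a', i', C, ha, ha', hi, hi', hne, e1, e2, e3⟩ :=
    Hcore m k hm hk q1.1.val q2.1.val q3.1.val q3.2.val q1.1.isLt q2.1.isLt q3.1.isLt q3.2.isLt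
  refine ⟨(⟨a, ha⟩, ⟨i, hi⟩), (⟨a', ha'⟩, ⟨i', hi'⟩), ?_, C, ?_⟩
  · intro hcon
    simp only [Prod.mk.injEq, Fin.mk.injEq] at hcon
    tauto
  · intro q hq
    simp only [Finset.mem_insert, Finset.mem_singleton] at hq
    rcases hq with rfl | rfl | rfl
    · rw [CP_dist h2m hk1, CP_dist h2m hk1, h1]
      dsimp only
      push_cast
      omega
    · rw [CP_dist h2m hk1, CP_dist h2m hk1, h2]
      dsimp only
      push_cast
      omega
    · rw [CP_dist h2m hk1, CP_dist h2m hk1]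
      dsimp only
      push_cast
      omega

lemma lower (m k : ℕ) (hm : 2 ≤ m) (hk : 3 ≤ k) (Q : Finset (Fin (2*m) × Fin k))
    (hQ : IsDoublyResolving (cycleGraph (2*m) □ pathGraph k) Q) : 4 ≤ Q.card := by
  have h2m : 2 ≤ 2*m := by omega
  have hk1 : 1 ≤ k := by omega
  by_contra hlt
  push_neg at hlt
  have hq0 : ∃ q ∈ Q, q.2.val = 0 := by
    by_contra hno
    push_neg at hno
    obtain ⟨u, hu, v, hv, hne⟩ := hQ (⟨0, by omega⟩, ⟨0, by omega⟩) (⟨0, by omega⟩, ⟨1, by omega⟩)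
      (by simp only [ne_eq, Prod.mk.injEq, Fin.mk.injEq]; omega)
    apply hne
    simp only [CP_dist h2m hk1]
    have h1 := hno u hu
    have h2 := hno v hv
    have h3 := u.2.isLt
    have h4 := v.2.isLt
    simp only [pd]
    push_cast
    omega
  have hqk : ∃ q ∈ Q, q.2.val = k - 1 := by
    by_contra hno
    push_neg at hno
    obtain ⟨u, hu, v, hv, hne⟩ := hQ (⟨0, by omega⟩, ⟨k-1, by omega⟩)
      (⟨0, by omega⟩, ⟨k-2, by omega⟩)
      (by simp only [ne_eq, Prod.mk.injEq, Fin.mk.injEq]; omega)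
    apply hne
    simp only [CP_dist h2m hk1]
    have h1 := hno u hu
    have h2 := hno v hv
    have h3 := u.2.isLt
    have h4 := v.2.isLt
    simp only [pd]
    push_cast
    omega
  obtain ⟨q1, hq1, hr1⟩ := hq0
  obtain ⟨q2, hq2, hr2⟩ := hqk
  have hne12 : q1 ≠ q2 := by
    intro h
    rw [h] at hr1
    omega
  obtain ⟨q3, hsub⟩ : ∃ q3, Q ⊆ {q1, q2, q3} := by
    rcases (Q \ {q1, q2}).eq_empty_or_nonempty with hemp | ⟨q3, hq3⟩
    · refine ⟨q1, fun q hq => ?_⟩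
      have : q ∈ ({q1, q2} : Finset _) := by
        by_contra hnot
        exact absurd (Finset.mem_sdiff.mpr ⟨hq, hnot⟩) (by simp [hemp])
      simp only [Finset.mem_insert, Finset.mem_singleton] at this ⊢
      tauto
    · refine ⟨q3, fun q hq => ?_⟩
      simp only [Finset.mem_insert, Finset.mem_singleton]
      by_cases h1 : q = q1
      · tauto
      by_cases h2 : q = q2
      · tauto
      have hsub2 : ({q1, q2} : Finset _) ⊆ Q := by
        intro z hz
        simp only [Finset.mem_insert, Finset.mem_singleton] at hz
        rcases hz with rfl | rfl <;> assumption
      have hcards : (Q \ {q1, q2}).card ≤ 1 := by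
        rw [Finset.card_sdiff_of_subset hsub2]
        have : ({q1, q2} : Finset _).card = 2 := Finset.card_pair hne12
        omega
      have := Finset.card_le_one.mp hcards q (Finset.mem_sdiff.mpr ⟨hq, by
        simp only [Finset.mem_insert, Finset.mem_singleton]; tauto⟩) q3 hq3
      tauto
  obtain ⟨x, y, hxy, C, hC⟩ := master m k hm hk q1 q2 q3 hr1 hr2
  obtain ⟨u, hu, v, hv, hne⟩ := hQ x y hxy
  have h1 := hC u (hsub hu)
  have h2 := hC v (hsub hv)
  apply hne
  omega

end Aux

theorem stmt9 (n k : ℕ) (hn : 4 ≤ n) (he : Even n) (hk : 3 ≤ k) :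
    IsLeast {m : ℕ | ∃ Q, IsDoublyResolving (cycleGraph n □ pathGraph k) Q ∧ Q.card = m} (4) := by
  obtain ⟨m, rfl⟩ : ∃ m, n = 2 * m := by
    obtain ⟨t, ht⟩ := he; exact ⟨t, by omega⟩
  have hm : 2 ≤ m := by omega
  constructor
  · refine ⟨_, upper m k hm hk, ?_⟩
    rw [Finset.card_insert_of_notMem, Finset.card_insert_of_notMem,
      Finset.card_insert_of_notMem, Finset.card_singleton]
    · simp only [Finset.mem_singleton, Prod.mk.injEq, Fin.mk.injEq]
      omega
    · simp only [Finset.mem_insert, Finset.mem_singleton, Prod.mk.injEq, Fin.mk.injEq]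
      omega
    · simp only [Finset.mem_insert, Finset.mem_singleton, Prod.mk.injEq, Fin.mk.injEq]
      omega
  · rintro z ⟨Q, hQ, rfl⟩
    exact lower m k hm hk Q hQ
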